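/- Let Δ ⊆ ℝ³ be the convex hull of the nine points (1,1,−1), (1,−1,−1), (−1,1,−1), (−1,−1,−1), (1,1,1), (−1,1,0), (−1,0,1), (1,−1,1), (−1,1,1). Let C₂ be the cone over the segment from (1,1,1) to (−1,1,0), i.e., C₂ = {r·(1,1,1) + s·(−1,1,0) : r, s ≥ 0}, and let C₁ = {r·(0,1,0) + s·(0,0,1) : r, s ≥ 0}. Then C₁ ∩ C₂ = {r·(0,2,1) : r ≥ 0}, and the lattice point (0,2,1) is not contained in Δ. (In particular, the conclusion of the proposition on intersections of cones can fail for a non-reflexive lattice polytope with the origin as its only interior lattice point.) -/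
import Mathlib


open Set

/-- The counterexample for the non-reflexive cube-with-corner-cut polytope: the cones
`C₂ = ℝ₊(1,1,1) + ℝ₊(-1,1,0)` and `C₁ = ℝ₊(0,1,0) + ℝ₊(0,0,1)` intersect in the ray over
`(0,2,1)`, which is a lattice point not contained in `Δ`. -/
theorem cone_intersection_counterexample_nonreflexive
    (Δ : Set (Fin 3 → ℝ))
    (hΔ : Δ = convexHull ℝ
      {![(1:ℝ), 1, -1], ![(1:ℝ), -1, -1], ![(-1:ℝ), 1, -1], ![(-1:ℝ), -1, -1],
       ![(1:ℝ), 1, 1], ![(-1:ℝ), 1, 0], ![(-1:ℝ), 0, 1], ![(1:ℝ), -1, 1],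
       ![(-1:ℝ), 1, 1]})
    (C₁ C₂ : Set (Fin 3 → ℝ))
    (hC₁ : C₁ = {x | ∃ r s : ℝ, 0 ≤ r ∧ 0 ≤ s ∧ x = r • ![(0:ℝ), 1, 0] + s • ![(0:ℝ), 0, 1]})
    (hC₂ : C₂ = {x | ∃ r s : ℝ, 0 ≤ r ∧ 0 ≤ s ∧ x = r • ![(1:ℝ), 1, 1] + s • ![(-1:ℝ), 1, 0]}) :
    C₁ ∩ C₂ = {x | ∃ r : ℝ, 0 ≤ r ∧ x = r • ![(0:ℝ), 2, 1]} ∧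
    ![(0:ℝ), 2, 1] ∉ Δ := by
  subst hΔ hC₁ hC₂
  constructor
  · ext x
    simp only [mem_inter_iff, mem_setOf_eq]
    constructor
    · rintro ⟨⟨r, s, hr, hs, h1⟩, ⟨a, b, ha, hb, h2⟩⟩
      have h0 : x 0 = a - b := by rw [h2]; simp; ring
      have h0' : x 0 = 0 := by rw [h1]; simp
      have hab : a = b := by linarith [h0.symm.trans h0']
      refine ⟨a, ha, ?_⟩
      funext i
      fin_cases i <;> rw [h2] <;> simp <;> linarith
    · rintro ⟨t, ht, rfl⟩
      constructor
      · refine ⟨2 * t, t, by linarith, ht, ?_⟩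
        funext i; fin_cases i <;> simp <;> ring
      · refine ⟨t, t, ht, ht, ?_⟩
        funext i; fin_cases i <;> simp <;> ring
  · intro h
    have hsub : convexHull ℝ
        ({![(1:ℝ), 1, -1], ![(1:ℝ), -1, -1], ![(-1:ℝ), 1, -1], ![(-1:ℝ), -1, -1],
         ![(1:ℝ), 1, 1], ![(-1:ℝ), 1, 0], ![(-1:ℝ), 0, 1], ![(1:ℝ), -1, 1],
         ![(-1:ℝ), 1, 1]} : Set (Fin 3 → ℝ)) ⊆ {x | x 1 ≤ 1} := by
      apply convexHull_min
      · intro p hp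
        simp only [mem_insert_iff, mem_singleton_iff] at hp
        rcases hp with rfl|rfl|rfl|rfl|rfl|rfl|rfl|rfl|rfl <;> norm_num
      · exact convex_halfSpace_le (LinearMap.isLinear (LinearMap.proj 1)) 1
    have := hsub h
    norm_num at this
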